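/- arXiv:solv-int/9806002 — 4 statements merged into one kernel-verified Lean document; each statement's English description precedes it below -/
import Mathlib

section
/- If h satisfies the Riccati equation h_x + h² = u + z² and h depends smoothly on a parameter t with ∂u/∂t = ḣ_x + 2hḣ (where ḣ = ∂h/∂t), then for any smooth periodic v with h = z/v + v_x/(2v) one has ∫_{S¹} v·(∂u/∂t) dx = d/dt ( 2z ∫_{S¹} h dx ). -/
open MeasureTheory intervalIntegral Metric

/-- If `h` satisfies the Riccati equation `h_x + h² = u + z²`,
depends smoothly on a parameter `t` with `∂u/∂t = ḣ_x + 2hḣ`, and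
`h = z/v + v_x/(2v)` with `v` smooth, nonvanishing and periodic, then
`∫_{S¹} v·(∂u/∂t) dx = d/dt (2z ∫_{S¹} h dx)`.  Functions on `S¹` are modelled
as 1-periodic functions of `x`, and `∫_{S¹}` as `∫_0^1`. -/
theorem casimir_differential (u v h : ℝ → ℝ → ℝ) (z : ℝ)
    (hu : ContDiff ℝ (⊤ : ℕ∞) (Function.uncurry u))
    (hv : ContDiff ℝ (⊤ : ℕ∞) (Function.uncurry v))
    (hh : ContDiff ℝ (⊤ : ℕ∞) (Function.uncurry h))
    (hup : ∀ t, Function.Periodic (u t) 1)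
    (hvp : ∀ t, Function.Periodic (v t) 1)
    (hhp : ∀ t, Function.Periodic (h t) 1)
    (hv0 : ∀ t x, v t x ≠ 0)
    (hric : ∀ t x, deriv (h t) x + (h t x)^2 = u t x + z^2)
    (hhv : ∀ t x, h t x = z / v t x + deriv (v t) x / (2 * v t x))
    (hut : ∀ t x, deriv (fun s => u s x) t
        = deriv (fun y => deriv (fun s => h s y) t) x
          + 2 * h t x * deriv (fun s => h s x) t) :
    ∀ t, ∫ x in (0:ℝ)..1, v t x * deriv (fun s => u s x) t
        = deriv (fun s => 2 * z * ∫ x in (0:ℝ)..1, h s x) t := by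
  intro t
  -- the partial t-derivative of h, as a smooth function of both variables
  set F : ℝ × ℝ → ℝ := fun p => fderiv ℝ (Function.uncurry h) p (1, 0) with hFdef
  have hF : ContDiff ℝ (⊤ : ℕ∞) F :=
    (hh.fderiv_right (by simp)).clm_apply contDiff_const
  have hD : ∀ s x, HasDerivAt (fun s' => h s' x) (F (s, x)) s := by
    intro s x
    have h1 : HasDerivAt (fun s' : ℝ => (s', x)) ((1 : ℝ), (0 : ℝ)) s :=
      (hasDerivAt_id s).prodMk (hasDerivAt_const s x)
    have h2 := ((hh.differentiable (by simp) (s, x)).hasFDerivAt).comp_hasDerivAt s h1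
    exact h2
  have hDeq : ∀ s x, deriv (fun s' => h s' x) s = F (s, x) := fun s x => (hD s x).deriv
  set ht : ℝ → ℝ := fun x => F (t, x) with htdef
  have htc : ContDiff ℝ (⊤ : ℕ∞) ht := hF.comp (contDiff_const.prodMk contDiff_id)
  have hvt : ContDiff ℝ (⊤ : ℕ∞) (v t) := hv.comp (contDiff_const.prodMk contDiff_id)
  have hhtper : ht 1 = ht 0 := by
    have e : (fun s => h s 1) = fun s => h s 0 := by
      funext s
      have := hhp s 0
      simpa using this
    simp only [htdef]
    rw [← hDeq t 1, ← hDeq t 0, e]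
  have hvper : v t 1 = v t 0 := by
    have := hvp t 0; simpa using this
  -- 2 v h = 2z + v'
  have h2vh : ∀ x, 2 * v t x * h t x = 2 * z + deriv (v t) x := by
    intro x
    have hx := hhv t x
    have hvx := hv0 t x
    field_simp [hvx] at hx
    refine mul_right_cancel₀ hvx ?_
    linear_combination (v t x) * hx
  -- rewrite the integrand
  have hint : ∀ x, v t x * deriv (fun s => u s x) t
      = (deriv (v t) x * ht x + v t x * deriv ht x) + 2 * z * ht x := by
    intro x
    have e1 : (fun y => deriv (fun s => h s y) t) = ht := by
      funext y; exact hDeq t y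
    rw [hut t x, e1, hDeq t x]
    have := h2vh x
    have := hDeq t x
    linear_combination (F (t, x)) * h2vh x
  -- derivative of the product v·ht in x
  have hprod : ∀ x, HasDerivAt (fun y => v t y * ht y)
      (deriv (v t) x * ht x + v t x * deriv ht x) x := by
    intro x
    exact ((hvt.differentiable (by simp) x).hasDerivAt).mul
      ((htc.differentiable (by simp) x).hasDerivAt)
  have hcont1 : Continuous fun x => deriv (v t) x * ht x + v t x * deriv ht x :=
    ((hvt.continuous_deriv (by simp)).mul htc.continuous).add
      (hvt.continuous.mul (htc.continuous_deriv (by simp)))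
  have hI1 : (∫ x in (0:ℝ)..1, (deriv (v t) x * ht x + v t x * deriv ht x)) = 0 := by
    rw [intervalIntegral.integral_eq_sub_of_hasDerivAt
      (fun x _ => hprod x) (hcont1.intervalIntegrable 0 1)]
    rw [hvper, hhtper]; ring
  -- LHS computation
  have hLHS : (∫ x in (0:ℝ)..1, v t x * deriv (fun s => u s x) t)
      = 2 * z * ∫ x in (0:ℝ)..1, ht x := by
    have : (∫ x in (0:ℝ)..1, v t x * deriv (fun s => u s x) t)
        = ∫ x in (0:ℝ)..1,
            ((deriv (v t) x * ht x + v t x * deriv ht x) + 2 * z * ht x) := by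
      apply intervalIntegral.integral_congr
      intro x _; exact hint x
    rw [this, intervalIntegral.integral_add (g := fun x => 2 * z * ht x) (hcont1.intervalIntegrable 0 1)
      ((continuous_const.mul htc.continuous).intervalIntegrable 0 1), hI1,
      intervalIntegral.integral_const_mul]
    ring
  -- differentiation under the integral sign for the RHS
  obtain ⟨C, hC⟩ := (IsCompact.exists_bound_of_continuousOn
    ((isCompact_Icc (a := t - 1) (b := t + 1)).prod (isCompact_Icc (a := (0:ℝ)) (b := 1)))
    hF.continuous.continuousOn)
  have hmem : ∀ x ∈ Set.uIoc (0:ℝ) 1, ∀ s ∈ ball t 1,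
      (s, x) ∈ (Set.Icc (t-1) (t+1)) ×ˢ (Set.Icc (0:ℝ) 1) := by
    intro x hx s hs
    rw [Set.uIoc_of_le (by norm_num : (0:ℝ) ≤ 1)] at hx
    rw [Real.ball_eq_Ioo] at hs
    exact ⟨⟨hs.1.le, hs.2.le⟩, ⟨hx.1.le, hx.2⟩⟩
  have hH : HasDerivAt (fun s => ∫ x in (0:ℝ)..1, h s x) (∫ x in (0:ℝ)..1, ht x) t := by
    have := intervalIntegral.hasDerivAt_integral_of_dominated_loc_of_deriv_le
      (F := fun s x => h s x) (F' := fun s x => F (s, x)) (x₀ := t)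
      (a := (0:ℝ)) (b := 1) (bound := fun _ => C) (μ := volume)
      (ball_mem_nhds t (by norm_num : (0:ℝ) < 1))
      (Filter.Eventually.of_forall fun s =>
        ((hh.continuous.comp (continuous_const.prodMk continuous_id)).aestronglyMeasurable).restrict)
      ((hh.continuous.comp (continuous_const.prodMk continuous_id)).intervalIntegrable 0 1)
      ((hF.continuous.comp (continuous_const.prodMk continuous_id)).aestronglyMeasurable).restrict
      (Filter.Eventually.of_forall fun x hx s hs => hC _ (hmem x hx s hs))
      (intervalIntegrable_const)
      (Filter.Eventually.of_forall fun x _ s _ => hD s x)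
    exact this.2
  have hRHS : deriv (fun s => 2 * z * ∫ x in (0:ℝ)..1, h s x) t
      = 2 * z * ∫ x in (0:ℝ)..1, ht x := (hH.const_mul (2 * z)).deriv
  rw [hLHS, hRHS]
end

section
/- Suppose h satisfies the Riccati equation z² = h^{(2)} − u·h^{(0)} where h^{(j)} are the Faà di Bruno iterates of h. Then multiplication by z² preserves the span H₊ of the Faà di Bruno iterates: z²·H₊ ⊆ H₊. In particular z^{2j}·1 ∈ H₊ and z^{2j}·h ∈ H₊ for all j ≥ 0. -/
/- Formal Laurent series in `z⁻¹` are modelled as Hahn series in `ζ = z⁻¹`: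
the coefficient of `z^m` is the coefficient at index `-m`.  The coefficient
ring `R` (smooth functions of `x`) carries a derivation `d = ∂_x` acting
coefficientwise on Laurent series. -/

variable {R : Type*} [CommRing R]

/-- Coefficientwise action of `∂_x` on Laurent series. -/
noncomputable def liftD (d : R →+ R) (f : HahnSeries ℤ R) : HahnSeries ℤ R where
  coeff n := d (f.coeff n)
  isPWO_support' := f.isPWO_support'.mono (by
    intro n hn
    simp only [Function.mem_support] at hn ⊢
    intro h0
    exact hn (by rw [h0, map_zero]))

/-- The Laurent series `z` (i.e. `ζ⁻¹`). -/
noncomputable def Zs (R : Type*) [CommRing R] : HahnSeries ℤ R :=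
  HahnSeries.single (-1) 1

/-- Faà di Bruno iterates: `h⁽⁰⁾ = 1`, `h⁽ʲ⁺¹⁾ = (∂_x + h)·h⁽ʲ⁾`. -/
noncomputable def fdb (d : R →+ R) (h : HahnSeries ℤ R) : ℕ → HahnSeries ℤ R
  | 0 => 1
  | j + 1 => liftD d (fdb d h j) + h * fdb d h j

/-! Write `L = ∂_x + h`, so that `h⁽ʲ⁺¹⁾ = L h⁽ʲ⁾`. The span `H₊` is stable under `L`,
because `L (c p) = (∂_x c) p + c (L p)` for a scalar `c`. Multiplication by `z` only shifts
coefficients, so it commutes with the coefficientwise `∂_x` and hence with `L`.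
Thus `z² h⁽ʲ⁺¹⁾ = L (z² h⁽ʲ⁾)`, and by induction everything reduces to
`z² h⁽⁰⁾ = h⁽²⁾ - u h⁽⁰⁾ ∈ H₊`, which is the Riccati equation. -/

lemma HahnSeries.mul_smul_comm' (c : R) (a x : HahnSeries ℤ R) :
    a * (c • x) = c • (a * x) := by
  simp only [← HahnSeries.C_mul_eq_smul]
  ring

lemma HahnSeries.mul_mem_span {s : Set (HahnSeries ℤ R)} {a : HahnSeries ℤ R}
    (ha : ∀ x ∈ s, a * x ∈ Submodule.span R s) {f : HahnSeries ℤ R}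
    (hf : f ∈ Submodule.span R s) : a * f ∈ Submodule.span R s := by
  induction hf using Submodule.span_induction with
  | mem x hx => exact ha x hx
  | zero => simp
  | add x y _ _ hx hy => simpa [mul_add] using add_mem hx hy
  | smul c x _ hx =>
    rw [HahnSeries.mul_smul_comm']
    exact Submodule.smul_mem _ _ hx

section liftD

variable {d : R →+ R}

@[simp]
lemma liftD_coeff (f : HahnSeries ℤ R) (n : ℤ) : (liftD d f).coeff n = d (f.coeff n) := rfl

lemma liftD_add (f g : HahnSeries ℤ R) : liftD d (f + g) = liftD d f + liftD d g := by
  ext n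
  simp

@[simp]
lemma liftD_zero : liftD d (0 : HahnSeries ℤ R) = 0 := by
  ext n
  simp

lemma liftD_single_one_mul (n : ℤ) (f : HahnSeries ℤ R) :
    liftD d (HahnSeries.single n 1 * f) = HahnSeries.single n 1 * liftD d f := by
  ext m
  simp [HahnSeries.coeff_single_mul]

lemma liftD_Zs_pow_mul (k : ℕ) (f : HahnSeries ℤ R) :
    liftD d (Zs R ^ k * f) = Zs R ^ k * liftD d f := by
  induction k generalizing f with
  | zero => simp
  | succ k ih => rw [pow_succ, mul_assoc, mul_assoc, ih, Zs, liftD_single_one_mul]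

lemma map_one_of_leibniz (hd : ∀ a b : R, d (a * b) = d a * b + a * d b) :
    d 1 = 0 := by
  simpa using hd 1 1

lemma liftD_one (hd : ∀ a b : R, d (a * b) = d a * b + a * d b) :
    liftD d (1 : HahnSeries ℤ R) = 0 := by
  ext n
  simp only [liftD_coeff, HahnSeries.coeff_one, HahnSeries.coeff_zero]
  split <;> simp [map_one_of_leibniz hd]

lemma liftD_smul (hd : ∀ a b : R, d (a * b) = d a * b + a * d b) (c : R)
    (f : HahnSeries ℤ R) :
    liftD d (c • f) = d c • f + c • liftD d f := by
  ext n
  simp [hd]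

end liftD

noncomputable def Hplus (d : R →+ R) (h : HahnSeries ℤ R) : Submodule R (HahnSeries ℤ R) :=
  Submodule.span R (Set.range (fdb d h))

section Hplus

variable {d : R →+ R} (h : HahnSeries ℤ R)

lemma fdb_mem_Hplus (j : ℕ) : fdb d h j ∈ Hplus d h := Submodule.subset_span ⟨j, rfl⟩

lemma fdb_succ (j : ℕ) : fdb d h (j + 1) = liftD d (fdb d h j) + h * fdb d h j := rfl

lemma fdb_one (hd : ∀ a b : R, d (a * b) = d a * b + a * d b) : fdb d h 1 = h := by
  rw [fdb_succ, fdb, liftD_one hd, mul_one, zero_add]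

lemma self_mem_Hplus (hd : ∀ a b : R, d (a * b) = d a * b + a * d b) :
    h ∈ Hplus d h := by
  simpa only [fdb_one h hd] using fdb_mem_Hplus (d := d) h 1

lemma liftD_add_mul_mem_Hplus (hd : ∀ a b : R, d (a * b) = d a * b + a * d b)
    {p : HahnSeries ℤ R} (hp : p ∈ Hplus d h) : liftD d p + h * p ∈ Hplus d h := by
  induction hp using Submodule.span_induction with
  | mem x hx =>
    obtain ⟨j, rfl⟩ := hx
    exact fdb_mem_Hplus h (j + 1)
  | zero => simp
  | add x y _ _ hx hy =>
    rw [liftD_add, mul_add, add_add_add_comm]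
    exact add_mem hx hy
  | smul c x hx hLx =>
    rw [liftD_smul hd, HahnSeries.mul_smul_comm', add_assoc, ← smul_add]
    exact add_mem (Submodule.smul_mem _ _ hx) (Submodule.smul_mem _ _ hLx)

lemma Zs_sq_mul_fdb_mem_Hplus (hd : ∀ a b : R, d (a * b) = d a * b + a * d b)
    {u : R} (hric : Zs R ^ 2 = fdb d h 2 - u • fdb d h 0) (j : ℕ) :
    Zs R ^ 2 * fdb d h j ∈ Hplus d h := by
  induction j with
  | zero =>
    rw [fdb, mul_one, hric]
    exact sub_mem (fdb_mem_Hplus h 2) (Submodule.smul_mem _ _ (fdb_mem_Hplus h 0))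
  | succ j ih =>
    have hL : Zs R ^ 2 * fdb d h (j + 1)
        = liftD d (Zs R ^ 2 * fdb d h j) + h * (Zs R ^ 2 * fdb d h j) := by
      rw [liftD_Zs_pow_mul, fdb_succ]
      ring
    rw [hL]
    exact liftD_add_mul_mem_Hplus h hd ih

end Hplus

lemma Submodule.pow_mul_mem {A : Type*} [Semiring A] [Module R A] {M : Submodule R A} {a : A}
    (ha : ∀ x ∈ M, a * x ∈ M) (n : ℕ) {x : A} (hx : x ∈ M) : a ^ n * x ∈ M := by
  induction n with
  | zero => simpa using hx
  | succ n ih => simpa [pow_succ', mul_assoc] using ha _ ih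

theorem zsq_preserves_Hplus_general (d : R →+ R)
    (hd : ∀ a b : R, d (a * b) = d a * b + a * d b)
    (h : HahnSeries ℤ R) (u : R)
    (hric : (Zs R) ^ 2 = fdb d h 2 - u • fdb d h 0) :
    (∀ f ∈ Submodule.span R (Set.range (fdb d h)),
        (Zs R) ^ 2 * f ∈ Submodule.span R (Set.range (fdb d h))) ∧
      (∀ j : ℕ, (Zs R) ^ (2 * j) * 1 ∈ Submodule.span R (Set.range (fdb d h)) ∧
        (Zs R) ^ (2 * j) * h ∈ Submodule.span R (Set.range (fdb d h))) := by
  have hstable : ∀ f ∈ Hplus d h, Zs R ^ 2 * f ∈ Hplus d h := fun f hf =>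
    HahnSeries.mul_mem_span (Set.forall_mem_range.mpr (Zs_sq_mul_fdb_mem_Hplus h hd hric)) hf
  refine ⟨hstable, fun j => ?_⟩
  rw [pow_mul]
  refine ⟨Submodule.pow_mul_mem hstable j (fdb_mem_Hplus h 0), ?_⟩
  exact Submodule.pow_mul_mem hstable j (self_mem_Hplus h hd)

/-- if `h` satisfies the Riccati equation `z² = h⁽²⁾ − u·h⁽⁰⁾`,
then multiplication by `z²` preserves the span `H₊` of the Faà di Bruno
iterates; in particular `z^{2j}·1 ∈ H₊` and `z^{2j}·h ∈ H₊` for all `j ≥ 0`. -/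
theorem zsq_preserves_Hplus (d : R →+ R)
    (hd : ∀ a b : R, d (a * b) = d a * b + a * d b)
    (h : HahnSeries ℤ R) (u : R)
    (h_monic : h.coeff (-1) = 1 ∧ h.coeff 0 = 0 ∧ ∀ n : ℤ, n < -1 → h.coeff n = 0)
    (hric : (Zs R) ^ 2 = fdb d h 2 - u • fdb d h 0) :
    (∀ f ∈ Submodule.span R (Set.range (fdb d h)),
        (Zs R) ^ 2 * f ∈ Submodule.span R (Set.range (fdb d h))) ∧
      (∀ j : ℕ, (Zs R) ^ (2 * j) * 1 ∈ Submodule.span R (Set.range (fdb d h)) ∧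
        (Zs R) ^ (2 * j) * h ∈ Submodule.span R (Set.range (fdb d h))) :=
  zsq_preserves_Hplus_general d hd h u hric
end

section
/- Let {H^{(k)}}_{k≥0} be Laurent series of the form H^{(k)} = z^k + Σ_{l≥1} H^k_l z^{-l} whose span H₊ satisfies the invariance condition (∂/∂t_j + H^{(j)})(H₊) ⊆ H₊ for all j. Then the currents satisfy the Central System: ∂H^{(k)}/∂t_j + H^{(j)}H^{(k)} = H^{(j+k)} + Σ_{l=1}^{k} H^j_l H^{(k-l)} + Σ_{l=1}^{j} H^k_l H^{(j-l)}. -/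
/- Formal Laurent series in `z⁻¹` are modelled as Hahn series in `ζ = z⁻¹`:
the coefficient of `z^m` is the coefficient at index `-m`; in particular
`H^k_l = (H k).coeff l` is the coefficient of `z^{-l}`.  The coefficient ring
`R` consists of functions of the times, with derivations `dT j = ∂/∂t_j`
acting coefficientwise on Laurent series. -/

variable {R : Type*} [CommRing R]

/-! Since `H⁽ⁱ⁾ = z^i + O(z⁻¹)`, the combination `Σ cᵢ H⁽ⁱ⁾` has coefficient `cₘ` at `z^m` for
every `m ≥ 0`, so an element of `H₊` is determined by its polynomial part. Both sides of the
Central System lie in `H₊` (the left one by invariance), and their polynomial parts agree: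
`∂/∂t_j` kills the constant leading coefficients, and the polynomial part of `H⁽ʲ⁾H⁽ᵏ⁾` is
`z^{j+k} + Σ_{l ≤ k} H^j_l z^{k-l} + Σ_{l ≤ j} H^k_l z^{j-l}`, which is also that of the right
side. -/

open HahnSeries

lemma map_one_eq_zero_of_leibniz (d : R →+ R) (hd : ∀ a b, d (a * b) = d a * b + a * d b) :
    d 1 = 0 := by
  simpa using hd 1 1

lemma coeff_eq_ite_of_nonpos {f : HahnSeries ℤ R} {k : ℤ}
    (hf : f.coeff (-k) = 1 ∧ (∀ n < -k, f.coeff n = 0) ∧ (∀ n, -k < n → n ≤ 0 → f.coeff n = 0))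
    {n : ℤ} (hn : n ≤ 0) : f.coeff n = if n = -k then 1 else 0 := by
  obtain ⟨h_eq, h_lt, h_gt⟩ := hf
  rcases lt_trichotomy n (-k) with h | rfl | h
  · rw [if_neg h.ne, h_lt n h]
  · rw [if_pos rfl, h_eq]
  · rw [if_neg h.ne', h_gt n h hn]

lemma coeff_mul_eq_zero_of_coeff_nonpos_eq_zero {f g : HahnSeries ℤ R}
    (hf : ∀ n ≤ 0, f.coeff n = 0) (hg : ∀ n ≤ 0, g.coeff n = 0) {n : ℤ} (hn : n ≤ 1) :
    (f * g).coeff n = 0 := by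
  by_contra h
  obtain ⟨a, ha, b, hb, hab⟩ := support_mul_subset (Function.mem_support.mpr h)
  have : 0 < a := not_le.mp fun h' => ha (hf a h')
  have : 0 < b := not_le.mp fun h' => hb (hg b h')
  simp only at hab
  omega

lemma coeff_single_add_mul_single_add {f g : HahnSeries ℤ R}
    (hf : ∀ n ≤ 0, f.coeff n = 0) (hg : ∀ n ≤ 0, g.coeff n = 0) (a b : ℤ) {n : ℤ} (hn : n ≤ 0) :
    ((single a 1 + f) * (single b 1 + g)).coeff n
      = (single (a + b) (1 : R)).coeff n + g.coeff (n - a) + f.coeff (n - b) := by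
  have hfg := coeff_mul_eq_zero_of_coeff_nonpos_eq_zero hf hg (n := n) (by omega)
  rw [add_mul, mul_add, mul_add, single_mul_single, one_mul]
  simp only [coeff_add, hfg, add_zero]
  rw [← sub_add_cancel n a, coeff_single_mul_add, sub_add_cancel, one_mul,
    ← sub_add_cancel n b, coeff_mul_single_add, sub_add_cancel, mul_one]

namespace Currents

variable {H : ℕ → HahnSeries ℤ R}

lemma coeff_linearCombination_neg_nat
    (hH : ∀ i, ∀ n ≤ 0, (H i).coeff n = if n = -(i : ℤ) then 1 else 0) (c : ℕ →₀ R) (m : ℕ) :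
    (Finsupp.linearCombination R H c).coeff (-m) = c m := by
  simp [Finsupp.linearCombination_apply, Finsupp.sum, hH _ (-(m : ℤ)) (by omega)]

lemma eq_of_mem_span_of_coeff_nonpos_eq
    (hH : ∀ i, ∀ n ≤ 0, (H i).coeff n = if n = -(i : ℤ) then 1 else 0) {f g : HahnSeries ℤ R}
    (hf : f ∈ Submodule.span R (Set.range H)) (hg : g ∈ Submodule.span R (Set.range H))
    (hfg : ∀ n ≤ 0, f.coeff n = g.coeff n) : f = g := by
  rw [← Finsupp.range_linearCombination] at hf hg
  obtain ⟨c, rfl⟩ := hf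
  obtain ⟨d, rfl⟩ := hg
  congr 1
  ext m
  rw [← coeff_linearCombination_neg_nat hH c, ← coeff_linearCombination_neg_nat hH d]
  exact hfg _ (by omega)

lemma coeff_sub_single
    (hH : ∀ i, ∀ n ≤ 0, (H i).coeff n = if n = -(i : ℤ) then 1 else 0) (i : ℕ) (n : ℤ) :
    (H i - single (-(i : ℤ)) 1).coeff n = if 0 < n then (H i).coeff n else 0 := by
  rw [coeff_sub, coeff_single]
  by_cases hn : 0 < n
  · rw [if_pos hn, if_neg (by omega), sub_zero]
  · rw [if_neg hn, hH i n (not_lt.mp hn)]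
    split_ifs <;> simp

lemma coeff_mul_neg_nat
    (hH : ∀ i, ∀ n ≤ 0, (H i).coeff n = if n = -(i : ℤ) then 1 else 0) (j k m : ℕ) :
    (H j * H k).coeff (-m) = (if m = j + k then 1 else 0)
      + (if m < j then (H k).coeff (j - m) else 0)
      + (if m < k then (H j).coeff (k - m) else 0) := by
  have hP (i : ℕ) (n : ℤ) (hn : n ≤ 0) : (H i - single (-(i : ℤ)) 1).coeff n = 0 := by
    rw [coeff_sub_single hH, if_neg (by omega)]
  rw [← add_sub_cancel (single (-(j : ℤ)) 1) (H j), ← add_sub_cancel (single (-(k : ℤ)) 1) (H k),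
    coeff_single_add_mul_single_add (hP j) (hP k) _ _ (by omega), coeff_sub_single hH,
    coeff_sub_single hH, coeff_single]
  have e1 : -(m : ℤ) = -j + -k ↔ m = j + k := by omega
  have e2 : 0 < (j : ℤ) - m ↔ m < j := by omega
  have e3 : 0 < (k : ℤ) - m ↔ m < k := by omega
  simp only [add_sub_cancel, e1, e2, e3, neg_sub_neg]

lemma coeff_sum_smul_neg_nat
    (hH : ∀ i, ∀ n ≤ 0, (H i).coeff n = if n = -(i : ℤ) then 1 else 0) (j k m : ℕ) :
    (∑ l ∈ Finset.Icc 1 k, (H j).coeff (l : ℤ) • H (k - l)).coeff (-m)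
      = if m < k then (H j).coeff (k - m) else 0 := by
  have hterm : ∀ l ∈ Finset.Icc 1 k, ((H j).coeff (l : ℤ) • H (k - l)).coeff (-m)
      = if l = k - m then (H j).coeff (l : ℤ) else 0 := fun l hl => by
    rw [Finset.mem_Icc] at hl
    rw [coeff_smul, hH (k - l) (-m) (by omega), smul_eq_mul]
    split_ifs <;> first | omega | simp
  rw [coeff_sum, Finset.sum_congr rfl hterm, Finset.sum_ite_eq']
  by_cases hmk : m < k
  · rw [if_pos (Finset.mem_Icc.mpr ⟨by omega, by omega⟩), if_pos hmk, Nat.cast_sub hmk.le]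
  · rw [if_neg fun h => hmk (by rw [Finset.mem_Icc] at h; omega), if_neg hmk]

end Currents

/-- if the currents `H⁽ᵏ⁾ = z^k + Σ_{l≥1} H^k_l z^{-l}` are such
that their span `H₊` satisfies `(∂/∂t_j + H⁽ʲ⁾)(H₊) ⊆ H₊` for all `j`, then
they satisfy the Central System
`∂H⁽ᵏ⁾/∂t_j + H⁽ʲ⁾H⁽ᵏ⁾ = H⁽ʲ⁺ᵏ⁾ + Σ_{l=1}^k H^j_l H⁽ᵏ⁻ˡ⁾ + Σ_{l=1}^j H^k_l H⁽ʲ⁻ˡ⁾`. -/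
theorem central_system_from_invariance (dT : ℕ → R →+ R)
    (hdT : ∀ j, ∀ a b : R, dT j (a * b) = dT j a * b + a * dT j b)
    (H : ℕ → HahnSeries ℤ R)
    (hHshape : ∀ k, (H k).coeff (-(k : ℤ)) = 1 ∧
      (∀ n : ℤ, n < -(k : ℤ) → (H k).coeff n = 0) ∧
      (∀ n : ℤ, -(k : ℤ) < n → n ≤ 0 → (H k).coeff n = 0))
    (hinv : ∀ j, ∀ f ∈ Submodule.span R (Set.range H),
      liftD (dT j) f + H j * f ∈ Submodule.span R (Set.range H)) :
    ∀ j k, liftD (dT j) (H k) + H j * H k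
        = H (j + k)
          + ∑ l ∈ Finset.Icc 1 k, ((H j).coeff (l : ℤ)) • H (k - l)
          + ∑ l ∈ Finset.Icc 1 j, ((H k).coeff (l : ℤ)) • H (j - l) := by
  have hH (i : ℕ) (n : ℤ) (hn : n ≤ 0) : (H i).coeff n = if n = -(i : ℤ) then 1 else 0 :=
    coeff_eq_ite_of_nonpos (hHshape i) hn
  have hmem (i : ℕ) : H i ∈ Submodule.span R (Set.range H) := Submodule.subset_span ⟨i, rfl⟩
  intro j k
  refine Currents.eq_of_mem_span_of_coeff_nonpos_eq hH (hinv j _ (hmem k)) ?_ fun n hn => ?_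
  · refine add_mem (add_mem (hmem _) ?_) ?_ <;>
      exact Submodule.sum_mem _ fun l _ => Submodule.smul_mem _ _ (hmem _)
  obtain ⟨m, rfl⟩ : ∃ m : ℕ, n = -m := ⟨n.natAbs, by omega⟩
  have hd : (liftD (dT j) (H k)).coeff (-m) = 0 := by
    change dT j _ = 0
    rw [hH k _ hn]
    split_ifs
    exacts [map_one_eq_zero_of_leibniz _ (hdT j), map_zero _]
  simp only [coeff_add, hd, Currents.coeff_mul_neg_nat hH, Currents.coeff_sum_smul_neg_nat hH,
    hH (j + k) _ hn, neg_inj, Nat.cast_inj]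
  ring
end

section
/- For a nilpotent shift matrix A of size (n+1)×(n+1) (A e_i = e_{i-1}), the matrix exponential satisfies exp(Σ_{l=1}^{n} t_l A^l) = Σ_{l=0}^{n} p_l(t_1,...,t_n) A^l, where p_l are the elementary Schur polynomials defined by exp(Σ_{i≥1} t_i z^i) = Σ_{k≥0} p_k(t) z^k. -/
/-!
If `a ^ N = 0`, then `f ↦ Σ_{i<N} coeff i f • a ^ i` is an algebra homomorphism `R⟦X⟧ → S`: it is
`aeval a ∘ trunc N`, and `aeval a` kills every polynomial divisible by `X ^ N`, in particular
`trunc N f * trunc N g - trunc N (f * g)`. For the shift matrix `A` (with `A ^ (n + 1) = 0`) this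
homomorphism sends `T = Σ t_i z^i` to `Σ t_l A^l`, hence the truncated exponential series
`Σ_{j≤n} T^j / j!` to the left-hand side. Its coefficients agree with the `p_k` for `k ≤ n`
because `z^k` does not occur in `T^j` for `j > k`.
-/

/-- The exponential of a nilpotent matrix (`M^d = 0`) as the finite sum
`Σ_{j<d} M^j / j!`. -/
noncomputable def nilpExp {m : ℕ} (d : ℕ) (M : Matrix (Fin m) (Fin m) ℝ) :
    Matrix (Fin m) (Fin m) ℝ :=
  ∑ j ∈ Finset.range d, ((j.factorial : ℝ)⁻¹) • M ^ j

/-- The formal power series `Σ_{i≥1} t_i z^i`. -/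
noncomputable def tSeries (t : ℕ → ℝ) : PowerSeries ℝ :=
  PowerSeries.mk fun i => if i = 0 then 0 else t i

open PowerSeries Finset

namespace PowerSeries

theorem coeff_pow_eq_zero_of_lt {R : Type*} [Semiring R] {f : R⟦X⟧}
    (hf : constantCoeff f = 0) {k j : ℕ} (h : k < j) : coeff k (f ^ j) = 0 :=
  coeff_of_lt_order k ((Nat.cast_lt.mpr h).trans_le (le_order_pow_of_constantCoeff_eq_zero j hf))

variable {R S : Type*} [CommRing R] [Ring S] [Algebra R S] {a : S} {N : ℕ}

theorem aeval_trunc_coe (ha : a ^ N = 0) (p : Polynomial R) :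
    Polynomial.aeval a (trunc N (p : R⟦X⟧)) = Polynomial.aeval a p := by
  obtain ⟨q, hq⟩ : Polynomial.X ^ N ∣ p - trunc N (p : R⟦X⟧) := by
    refine Polynomial.X_pow_dvd_iff.mpr fun d hd => ?_
    rw [Polynomial.coeff_sub, coeff_trunc, if_pos hd, Polynomial.coeff_coe, sub_self]
  have := congrArg (Polynomial.aeval a) hq
  rw [map_sub, map_mul, map_pow, Polynomial.aeval_X, ha, zero_mul, sub_eq_zero] at this
  exact this.symm

noncomputable def aevalOfPowEqZero (ha : a ^ N = 0) : R⟦X⟧ →ₐ[R] S :=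
  AlgHom.ofLinearMap ((Polynomial.aeval a).toLinearMap ∘ₗ trunc N)
    (by simpa using aeval_trunc_coe ha 1)
    (fun f g => by
      simp only [LinearMap.coe_comp, Function.comp_apply, AlgHom.toLinearMap_apply]
      rw [← trunc_trunc_mul_trunc, ← Polynomial.coe_mul, aeval_trunc_coe ha, map_mul])

theorem aevalOfPowEqZero_apply (ha : a ^ N = 0) (f : R⟦X⟧) :
    aevalOfPowEqZero ha f = ∑ i ∈ range N, coeff i f • a ^ i := by
  simp only [aevalOfPowEqZero, AlgHom.ofLinearMap_apply, LinearMap.coe_comp, Function.comp_apply,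
    AlgHom.toLinearMap_apply, Polynomial.aeval_def, eval₂_trunc_eq_sum_range, Algebra.smul_def]

theorem aevalOfPowEqZero_congr (ha : a ^ N = 0) {f g : R⟦X⟧}
    (h : ∀ i < N, coeff i f = coeff i g) : aevalOfPowEqZero ha f = aevalOfPowEqZero ha g := by
  simp only [aevalOfPowEqZero_apply]
  exact sum_congr rfl fun i hi => by rw [h i (mem_range.mp hi)]

end PowerSeries

namespace Matrix

variable {R : Type*} [Semiring R]

theorem shift_pow (m l : ℕ) :
    (of fun i j : Fin m => if (i : ℕ) + 1 = j then (1 : R) else 0) ^ l =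
      of fun i j : Fin m => if (i : ℕ) + l = j then (1 : R) else 0 := by
  induction l with
  | zero => ext i j; simp [one_apply, Fin.ext_iff]
  | succ l ih =>
    ext i j
    rw [pow_succ, ih, mul_apply]
    simp only [of_apply, ite_mul, one_mul, zero_mul]
    rw [Fin.sum_univ_eq_sum_range
      (fun k => if (i : ℕ) + l = k then (if k + 1 = (j : ℕ) then (1 : R) else 0) else 0),
      sum_ite_eq]
    grind

theorem shift_pow_self (m : ℕ) :
    (of fun i j : Fin m => if (i : ℕ) + 1 = j then (1 : R) else 0) ^ m = 0 := by
  ext i j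
  rw [shift_pow, of_apply, if_neg (by omega), zero_apply]

end Matrix

theorem constantCoeff_tSeries (t : ℕ → ℝ) : constantCoeff (tSeries t) = 0 := by
  rw [← coeff_zero_eq_constantCoeff_apply, tSeries, coeff_mk, if_pos rfl]

theorem nilpExp_sum_smul_pow_of_pow_eq_zero {m n : ℕ} {A : Matrix (Fin m) (Fin m) ℝ}
    (hA : A ^ (n + 1) = 0) (t p : ℕ → ℝ)
    (hp : ∀ k, p k = ∑ j ∈ range (k + 1), (j.factorial : ℝ)⁻¹ * coeff k ((tSeries t) ^ j)) :
    nilpExp (n + 1) (∑ l ∈ Icc 1 n, t l • A ^ l) = ∑ l ∈ range (n + 1), p l • A ^ l := by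
  set φ := aevalOfPowEqZero (R := ℝ) hA
  have hT : ∑ l ∈ Icc 1 n, t l • A ^ l = φ (tSeries t) := by
    rw [aevalOfPowEqZero_apply, sum_range_eq_add_Ico _ n.succ_pos, Nat.succ_eq_add_one,
      Ico_add_one_right_eq_Icc, coeff_zero_eq_constantCoeff_apply, constantCoeff_tSeries,
      zero_smul, zero_add]
    refine sum_congr rfl fun l hl => ?_
    rw [tSeries, coeff_mk, if_neg (by rw [mem_Icc] at hl; omega)]
  have hP : ∑ l ∈ range (n + 1), p l • A ^ l = φ (mk p) := by
    simp [φ, aevalOfPowEqZero_apply]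
  rw [hT, hP, nilpExp]
  simp_rw [← map_pow, ← map_smul, ← map_sum]
  refine aevalOfPowEqZero_congr hA fun k hk => ?_
  rw [coeff_mk, hp, map_sum]
  refine (sum_subset (range_subset_range.mpr (by omega)) fun j _ hj => ?_).symm
  rw [mem_range, not_lt] at hj
  rw [coeff_smul, coeff_pow_eq_zero_of_lt (constantCoeff_tSeries t) hj, smul_zero]

/-- for the `(n+1)×(n+1)` shift matrix `A` (so `A^{n+1} = 0`),
the matrix exponential satisfies
`exp(Σ_{l=1}^n t_l A^l) = Σ_{l=0}^n p_l(t) A^l`,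
where the elementary Schur polynomials `p_k` are the coefficients of
`exp(Σ_{i≥1} t_i z^i) = Σ_{k≥0} p_k(t) z^k`, i.e.
`p k = Σ_j (1/j!)·(coefficient of z^k in (Σ_{i≥1} t_i z^i)^j)`. -/
theorem exp_shift_schur (n : ℕ) (t : ℕ → ℝ) (p : ℕ → ℝ)
    (hp : ∀ k, p k = ∑ j ∈ Finset.range (k + 1),
      (j.factorial : ℝ)⁻¹ * PowerSeries.coeff k ((tSeries t) ^ j)) :
    nilpExp (n + 1)
        (∑ l ∈ Finset.Icc 1 n, t l •
          (Matrix.of fun i j : Fin (n + 1) =>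
            if (i : ℕ) + 1 = (j : ℕ) then (1 : ℝ) else 0) ^ l)
      = ∑ l ∈ Finset.range (n + 1), p l •
          (Matrix.of fun i j : Fin (n + 1) =>
            if (i : ℕ) + 1 = (j : ℕ) then (1 : ℝ) else 0) ^ l :=
  nilpExp_sum_smul_pow_of_pow_eq_zero (Matrix.shift_pow_self (n + 1)) t p hp
end
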